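/- Let A be an m×n integer matrix. Suppose P is an m×m integer matrix and Q is an n×n integer matrix, both invertible over ℤ (their determinants are units of ℤ), such that B = P * A * Q is a Smith diagonal matrix: there is α : ℕ → ℤ with α j dividing α (j+1) for all j, and B i j = α i when the underlying natural numbers of i and j are equal, and B i j = 0 otherwise. Then for every i ≤ min m n, the i-th determinant divisor satisfies d_i(A) = |α 0 · α 1 · ⋯ · α (i−1)| (the natAbs of the product of the first i diagonal entries). In particular, whenever d_i(A) ≠ 0 one has α i · d_i(A) = ± d_{i+1}(A), i.e., the elementary divisors coincide up to sign with the ratios of consecutive determinant divisors. -/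

import Mathlib

/-!
Expanding the determinant of a product row by row (a one-sided Cauchy–Binet argument) shows
that every `i × i` minor of `P * A * Q` is a `ℤ`-combination of `i × i` minors of `A`, so
`d_i(A) ∣ d_i(P * A * Q)`, with equality when `P` and `Q` are invertible. For the Smith matrix
`B = P * A * Q`, each nonzero term in the Leibniz expansion of an `i × i` minor is a product of
`i` distinct diagonal entries, which the chain `α 0 ∣ α 1 ∣ ⋯` makes divisible by
`α 0 ⋯ α (i - 1)`; the leading `i × i` minor equals that product.
-/

open Matrix Finset Function

section Minors

variable {R : Type*} [CommRing R] {κ μ ν : Type*} [Fintype κ] [DecidableEq κ] [Fintype μ]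

theorem Matrix.det_mul_eq_sum_prod_mul_det_submatrix (M : Matrix κ μ R) (N : Matrix μ κ R) :
    (M * N).det = ∑ f : κ → μ, (∏ k, M k (f k)) * (N.submatrix f id).det := by
  have hrows : (M * N).det = detRowAlternating.toMultilinearMap (fun k => ∑ x, M k x • N x) := by
    congr 1
    ext k l
    simp [mul_apply, Finset.sum_apply]
  rw [hrows, MultilinearMap.map_sum]
  refine Finset.sum_congr rfl fun f _ => ?_
  rw [MultilinearMap.map_smul_univ, smul_eq_mul]
  rfl

theorem Matrix.dvd_det_mul_of_dvd_det_submatrix_right {d : R} (M : Matrix κ μ R)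
    (N : Matrix μ κ R) (h : ∀ f : κ → μ, Injective f → d ∣ (N.submatrix f id).det) :
    d ∣ (M * N).det := by
  rw [det_mul_eq_sum_prod_mul_det_submatrix]
  refine Finset.dvd_sum fun f _ => Dvd.dvd.mul_left ?_ _
  by_cases hf : Injective f
  · exact h f hf
  · obtain ⟨a, b, hab, hne⟩ : ∃ a b, f a = f b ∧ a ≠ b := by
      simpa [Injective] using hf
    rw [det_zero_of_row_eq hne (by ext; simp [hab])]
    exact dvd_zero d

theorem Matrix.dvd_det_mul_of_dvd_det_submatrix_left {d : R} (M : Matrix κ μ R)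
    (N : Matrix μ κ R) (h : ∀ g : κ → μ, Injective g → d ∣ (M.submatrix id g).det) :
    d ∣ (M * N).det := by
  rw [← det_transpose, transpose_mul]
  exact dvd_det_mul_of_dvd_det_submatrix_right _ _ fun g hg => by
    simpa [← transpose_submatrix] using h g hg

theorem Matrix.dvd_det_submatrix_mul_mul [Fintype ν] {d : R} {A : Matrix μ ν R}
    (h : ∀ ρ : κ → μ, ∀ σ : κ → ν, Injective ρ → Injective σ → d ∣ (A.submatrix ρ σ).det)
    (P : Matrix μ μ R) (Q : Matrix ν ν R) (ρ : κ → μ) (σ : κ → ν) :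
    d ∣ ((P * A * Q).submatrix ρ σ).det := by
  rw [Matrix.mul_assoc, submatrix_mul _ _ ρ id σ bijective_id]
  refine dvd_det_mul_of_dvd_det_submatrix_right _ _ fun f hf => ?_
  rw [submatrix_submatrix, comp_id, id_comp, submatrix_mul _ _ f id σ bijective_id]
  refine dvd_det_mul_of_dvd_det_submatrix_left _ _ fun g hg => ?_
  simpa using h f g hf hg

end Minors

section DivisibilityChain

variable {β : Type*} [CommMonoid β] {α : ℕ → β}

theorem prod_range_dvd_prod_of_card_eq (hα : ∀ j, α j ∣ α (j + 1)) :
    ∀ {i : ℕ} {s : Finset ℕ}, s.card = i → ∏ j ∈ range i, α j ∣ ∏ j ∈ s, α j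
  | 0, s, hs => by simp [card_eq_zero.mp hs]
  | i + 1, s, hs => by
    have hne : s.Nonempty := card_pos.mp (by omega)
    have hi : i ≤ s.max' hne := by
      have hsub : s ⊆ range (s.max' hne + 1) := fun y hy =>
        mem_range.2 (Nat.lt_succ_of_le (le_max' s y hy))
      have := card_le_card hsub
      rw [card_range] at this
      omega
    rw [prod_range_succ, ← prod_erase_mul s α (max'_mem s hne)]
    have hcard : (s.erase (s.max' hne)).card = i := by
      rw [card_erase_of_mem (max'_mem s hne), hs, Nat.add_sub_cancel]
    exact mul_dvd_mul (prod_range_dvd_prod_of_card_eq hα hcard)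
      (Nat.rel_of_forall_rel_succ_of_le_of_le (· ∣ ·) (fun n _ => hα n) (Nat.zero_le i) hi)

end DivisibilityChain

section SmithDiagonal

variable {R : Type*} [CommRing R] {m n i : ℕ} {α : ℕ → R} {B : Matrix (Fin m) (Fin n) R}

theorem prod_range_dvd_det_submatrix_of_smith (hα : ∀ j, α j ∣ α (j + 1))
    (hB : ∀ k l, B k l = if (k : ℕ) = l then α k else 0)
    {ρ : Fin i → Fin m} (hρ : Injective ρ) (σ : Fin i → Fin n) :
    ∏ j ∈ range i, α j ∣ (B.submatrix ρ σ).det := by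
  rw [det_apply']
  refine Finset.dvd_sum fun π _ => Dvd.dvd.mul_left ?_ _
  by_cases hall : ∀ k, (ρ (π k) : ℕ) = σ k
  · have hdiag : ∏ k, B.submatrix ρ σ (π k) k = ∏ k, α (ρ k) := by
      rw [← Equiv.prod_comp π (fun k => α (ρ k))]
      exact prod_congr rfl fun k _ => by simp [hB, hall k]
    have hinj : Injective fun k => (ρ k : ℕ) := Fin.val_injective.comp hρ
    rw [hdiag, ← prod_image (s := univ) (fun a _ b _ h => hinj h)]
    exact prod_range_dvd_prod_of_card_eq hα (by rw [card_image_of_injective _ hinj, card_fin])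
  · push Not at hall
    obtain ⟨k, hk⟩ := hall
    rw [prod_eq_zero (mem_univ k) (by simp [hB, hk])]
    exact dvd_zero _

theorem det_submatrix_castLE_of_smith (hB : ∀ k l, B k l = if (k : ℕ) = l then α k else 0)
    (him : i ≤ m) (hin : i ≤ n) :
    (B.submatrix (Fin.castLE him) (Fin.castLE hin)).det = ∏ j ∈ range i, α j := by
  rw [← Fin.prod_univ_eq_prod_range, ← det_diagonal]
  congr 1
  ext k l
  simp [hB, diagonal_apply, Fin.val_inj]

end SmithDiagonal

/-- The `i`-th determinant divisor of an integer matrix: the gcd of the absolute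
values of all `i × i` minors (with `d_0 = 1`). -/
def detDivisor {m n : ℕ} (A : Matrix (Fin m) (Fin n) ℤ) (i : ℕ) : ℕ :=
  Finset.univ.gcd
    (fun p : {ρ : Fin i → Fin m // Function.Injective ρ} ×
        {σ : Fin i → Fin n // Function.Injective σ} =>
      ((A.submatrix p.1.1 p.2.1).det).natAbs)

section DetDivisor

variable {m n i : ℕ}

theorem dvd_detDivisor_iff {A : Matrix (Fin m) (Fin n) ℤ} {d : ℕ} :
    d ∣ detDivisor A i ↔ ∀ (ρ : Fin i → Fin m) (σ : Fin i → Fin n),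
      Injective ρ → Injective σ → (d : ℤ) ∣ (A.submatrix ρ σ).det := by
  simp only [detDivisor, Finset.dvd_gcd_iff, mem_univ, true_implies, Int.natCast_dvd,
    Subtype.forall, Prod.forall]
  exact ⟨fun h ρ σ hρ hσ => h ρ hρ σ hσ, fun h ρ hρ σ hσ => h ρ σ hρ hσ⟩

theorem detDivisor_dvd_det_submatrix (A : Matrix (Fin m) (Fin n) ℤ) {ρ : Fin i → Fin m}
    {σ : Fin i → Fin n} (hρ : Injective ρ) (hσ : Injective σ) :
    (detDivisor A i : ℤ) ∣ (A.submatrix ρ σ).det :=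
  dvd_detDivisor_iff.mp dvd_rfl ρ σ hρ hσ

theorem detDivisor_dvd_detDivisor_mul_mul (A : Matrix (Fin m) (Fin n) ℤ)
    (P : Matrix (Fin m) (Fin m) ℤ) (Q : Matrix (Fin n) (Fin n) ℤ) :
    detDivisor A i ∣ detDivisor (P * A * Q) i :=
  dvd_detDivisor_iff.mpr fun ρ σ _ _ =>
    dvd_det_submatrix_mul_mul (fun _ _ => detDivisor_dvd_det_submatrix A) P Q ρ σ

theorem detDivisor_mul_mul_of_isUnit (A : Matrix (Fin m) (Fin n) ℤ)
    {P : Matrix (Fin m) (Fin m) ℤ} {Q : Matrix (Fin n) (Fin n) ℤ}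
    (hP : IsUnit P.det) (hQ : IsUnit Q.det) :
    detDivisor (P * A * Q) i = detDivisor A i := by
  refine Nat.dvd_antisymm ?_ (detDivisor_dvd_detDivisor_mul_mul A P Q)
  have hA : P⁻¹ * (P * A * Q) * Q⁻¹ = A := by
    rw [Matrix.mul_assoc, Matrix.mul_assoc, mul_nonsing_inv Q hQ, Matrix.mul_one,
      ← Matrix.mul_assoc, nonsing_inv_mul P hP, Matrix.one_mul]
  simpa only [hA] using detDivisor_dvd_detDivisor_mul_mul (P * A * Q) P⁻¹ Q⁻¹

theorem detDivisor_eq_of_smith {α : ℕ → ℤ} (hα : ∀ j, α j ∣ α (j + 1))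
    {B : Matrix (Fin m) (Fin n) ℤ} (hB : ∀ k l, B k l = if (k : ℕ) = l then α k else 0)
    (hi : i ≤ min m n) :
    detDivisor B i = (∏ j ∈ range i, α j).natAbs := by
  have him : i ≤ m := hi.trans (min_le_left m n)
  have hin : i ≤ n := hi.trans (min_le_right m n)
  refine Nat.dvd_antisymm ?_ (dvd_detDivisor_iff.mpr fun ρ σ hρ _ => ?_)
  · rw [← Int.natCast_dvd, ← det_submatrix_castLE_of_smith hB him hin]
    exact detDivisor_dvd_det_submatrix B (Fin.castLE_injective him) (Fin.castLE_injective hin)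
  · exact Int.natAbs_dvd.mpr (prod_range_dvd_det_submatrix_of_smith hα hB hρ σ)

end DetDivisor

/-- **Smith's theorem.** If `P * A * Q` is a Smith diagonal matrix with
diagonal entries `α 0 ∣ α 1 ∣ ⋯`, where `P, Q` are invertible over `ℤ`, then for all
`i ≤ min m n` the `i`-th determinant divisor of `A` is `|α 0 ⋯ α (i-1)|`; in particular
the elementary divisors are, up to sign, the ratios of consecutive determinant
divisors. -/
theorem statement2 (m n : ℕ) (A : Matrix (Fin m) (Fin n) ℤ)
    (P : Matrix (Fin m) (Fin m) ℤ) (Q : Matrix (Fin n) (Fin n) ℤ)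
    (hP : IsUnit P.det) (hQ : IsUnit Q.det)
    (α : ℕ → ℤ) (hchain : ∀ j : ℕ, α j ∣ α (j + 1))
    (hdiag : ∀ (i : Fin m) (j : Fin n),
      ((i : ℕ) = (j : ℕ) → (P * A * Q) i j = α (i : ℕ)) ∧
      ((i : ℕ) ≠ (j : ℕ) → (P * A * Q) i j = 0)) :
    (∀ i : ℕ, i ≤ min m n →
        detDivisor A i = (∏ j ∈ Finset.range i, α j).natAbs) ∧
    (∀ i : ℕ, i + 1 ≤ min m n → detDivisor A i ≠ 0 →
        α i * (detDivisor A i : ℤ) = (detDivisor A (i + 1) : ℤ) ∨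
        α i * (detDivisor A i : ℤ) = -(detDivisor A (i + 1) : ℤ)) := by
  have hB : ∀ k l, (P * A * Q) k l = if (k : ℕ) = l then α k else 0 := fun k l => by
    split_ifs with h
    exacts [(hdiag k l).1 h, (hdiag k l).2 h]
  have hd : ∀ i, i ≤ min m n → detDivisor A i = (∏ j ∈ range i, α j).natAbs := fun i hi => by
    rw [← detDivisor_mul_mul_of_isUnit A hP hQ, detDivisor_eq_of_smith hchain hB hi]
  refine ⟨hd, fun i hi _ => ?_⟩
  rw [hd i (by omega), hd (i + 1) hi, prod_range_succ, Int.natAbs_mul, Nat.cast_mul,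
    Int.natCast_natAbs, Int.natCast_natAbs, mul_comm]
  rcases abs_choice (α i) with h | h
  · left; rw [h]
  · right; rw [h]; ring
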